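/- Let G be a (claw, co-claw)-free graph that contains no induced net, 3-sun, or antenna, but contains an induced bull. Then G has at most 7 vertices; more precisely, G is an induced subgraph of a fixed 7-vertex graph F_2. -/
import Mathlib


open SimpleGraph

/-- `H` occurs as an induced subgraph of `G`. -/
def HasInducedCopy {V W : Type*} (G : SimpleGraph V) (H : SimpleGraph W) : Prop :=
  ∃ f : W ↪ V, ∀ a b, H.Adj a b ↔ G.Adj (f a) (f b)

/-- The graph on `Fin n` with the given edge list. -/
def listGraph (n : ℕ) (l : List (Fin n × Fin n)) : SimpleGraph (Fin n) :=
  SimpleGraph.fromRel (fun a b => (a, b) ∈ l)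

/-- The claw `K_{1,3}`. -/
def clawGraph : SimpleGraph (Fin 4) := listGraph 4 [(0,1),(0,2),(0,3)]

/-- The co-claw: the complement of the claw (a triangle plus an isolated vertex). -/
def coclawGraph : SimpleGraph (Fin 4) := clawGraphᶜ

/-- The net: a triangle `0,1,2` with pendant vertices `3,4,5`, where `3+i` is
adjacent exactly to `i`. -/
def netGraph : SimpleGraph (Fin 6) := listGraph 6 [(0,1),(0,2),(1,2),(0,3),(1,4),(2,5)]

/-- The 3-sun: the complement of the net. -/
def sunGraph : SimpleGraph (Fin 6) := netGraphᶜ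

/-- The bull: a triangle `0,1,2` with pendant vertices `3` (adjacent to `0`)
and `4` (adjacent to `1`). -/
def bullGraph : SimpleGraph (Fin 5) := listGraph 5 [(0,1),(0,2),(1,2),(0,3),(1,4)]

/-- `{a, b, c}` is an asteroidal triple of `G`: an independent set of three
vertices such that any two of them are joined by a path avoiding the closed
neighbourhood of the third. -/
def IsAT {V : Type*} (G : SimpleGraph V) (a b c : V) : Prop :=
  a ≠ b ∧ a ≠ c ∧ b ≠ c ∧ ¬G.Adj a b ∧ ¬G.Adj a c ∧ ¬G.Adj b c ∧
  (∃ p : G.Walk a b, ∀ x ∈ p.support, x ≠ c ∧ ¬G.Adj c x) ∧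
  (∃ p : G.Walk a c, ∀ x ∈ p.support, x ≠ b ∧ ¬G.Adj b x) ∧
  (∃ p : G.Walk b c, ∀ x ∈ p.support, x ≠ a ∧ ¬G.Adj a x)

/-- A graph is AT-free if it contains no asteroidal triple. -/
def ATFree {V : Type*} (G : SimpleGraph V) : Prop := ∀ a b c : V, ¬ IsAT G a b c

/-- A unit interval graph: vertices are unit intervals `[f v, f v + 1]` on the
real line, and distinct vertices are adjacent iff their intervals intersect. -/
def IsUnitIntervalGraph {V : Type*} (G : SimpleGraph V) : Prop :=
  ∃ f : V → ℝ, ∀ u v : V, G.Adj u v ↔ u ≠ v ∧ |f u - f v| ≤ 1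

/-- The antenna: the 4-cycle `0-1-2-3-0` together with a vertex `4` adjacent
to `1` and `2` (so `{1,2,4}` is a triangle) and a pendant vertex `5` attached
to `4`. -/
def antennaGraph : SimpleGraph (Fin 6) :=
  listGraph 6 [(0,1),(0,3),(1,2),(2,3),(4,1),(4,2),(5,4)]

/-- The 9-vertex graph `F₁`: the antenna (with `c₁ = 4`, `c₂ = 1`, `c₃ = 2`,
`s₁ = 5`, `s₂ = 0`, `s₃ = 3`) extended by a `D₁`-vertex `6` adjacent exactly
to `s₂,s₃,c₁,s₁`, a `D₂`-vertex `7` adjacent exactly to `s₁,c₂,s₂`, and a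
`D₃`-vertex `8` adjacent exactly to `s₁,c₃,s₃`. -/
def F1Graph : SimpleGraph (Fin 9) :=
  listGraph 9 [(0,1),(0,3),(1,2),(2,3),(4,1),(4,2),(5,4),
    (6,0),(6,3),(6,4),(6,5),(7,5),(7,1),(7,0),(8,5),(8,2),(8,3)]

/-- The 7-vertex graph `F₂`: the bull (triangle `c₁ = 0`, `c₂ = 1`, `c₃ = 2`
with pendants `s₁ = 3` at `c₁` and `s₂ = 4` at `c₂`) extended by a vertex
`x = 5` adjacent exactly to `s₁, c₁, s₂` and a vertex `y = 6` adjacent exactly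
to `s₁, c₂, s₂`. -/
def F2Graph : SimpleGraph (Fin 7) :=
  listGraph 7 [(0,1),(0,2),(1,2),(0,3),(1,4),(5,3),(5,0),(5,4),(6,3),(6,1),(6,4)]

instance (n : ℕ) (l : List (Fin n × Fin n)) : DecidableRel (listGraph n l).Adj :=
  fun a b => decidable_of_iff _ (SimpleGraph.fromRel_adj _ a b).symm

instance : DecidableRel clawGraph.Adj := by unfold clawGraph; infer_instance
instance : DecidableRel coclawGraph.Adj := by unfold coclawGraph; infer_instance
instance : DecidableRel netGraph.Adj := by unfold netGraph; infer_instance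
instance : DecidableRel sunGraph.Adj := by unfold sunGraph; infer_instance
instance : DecidableRel bullGraph.Adj := by unfold bullGraph; infer_instance
instance : DecidableRel antennaGraph.Adj := by unfold antennaGraph; infer_instance
instance : DecidableRel F2Graph.Adj := by unfold F2Graph; infer_instance

lemma copy_of_lt {V : Type*} {k : ℕ} (G : SimpleGraph V) (K : SimpleGraph (Fin k)) (w : Fin k → V)
    (hinj : ∀ a b : Fin k, a < b → w a ≠ w b)
    (h : ∀ a b : Fin k, a < b → (K.Adj a b ↔ G.Adj (w a) (w b))) : HasInducedCopy G K := by
  refine ⟨⟨w, ?_⟩, ?_⟩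
  · intro a b hab
    rcases lt_trichotomy a b with h' | h' | h'
    · exact absurd hab (hinj a b h')
    · exact h'
    · exact absurd hab.symm (hinj b a h')
  · intro a b
    rcases lt_trichotomy a b with h' | h' | h'
    · exact h a b h'
    · subst h'; exact iff_of_false (K.irrefl) (G.irrefl)
    · exact (K.adj_comm a b).trans ((h b a h').trans (G.adj_comm _ _))

lemma copy4 {V : Type*} (G : SimpleGraph V) (K : SimpleGraph (Fin 4)) (w : Fin 4 → V)
    (d01 : w 0 ≠ w 1) (d02 : w 0 ≠ w 2) (d03 : w 0 ≠ w 3)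
    (d12 : w 1 ≠ w 2) (d13 : w 1 ≠ w 3) (d23 : w 2 ≠ w 3)
    (h01 : K.Adj 0 1 ↔ G.Adj (w 0) (w 1)) (h02 : K.Adj 0 2 ↔ G.Adj (w 0) (w 2))
    (h03 : K.Adj 0 3 ↔ G.Adj (w 0) (w 3)) (h12 : K.Adj 1 2 ↔ G.Adj (w 1) (w 2))
    (h13 : K.Adj 1 3 ↔ G.Adj (w 1) (w 3)) (h23 : K.Adj 2 3 ↔ G.Adj (w 2) (w 3)) :
    HasInducedCopy G K := by
  refine copy_of_lt G K w ?_ ?_ <;>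
  · intro a b hab
    fin_cases a <;> fin_cases b <;>
      first
        | exact absurd hab (by decide)
        | exact h01 | exact h02 | exact h03 | exact h12 | exact h13 | exact h23
        | exact d01 | exact d02 | exact d03 | exact d12 | exact d13 | exact d23

lemma copy6 {V : Type*} (G : SimpleGraph V) (K : SimpleGraph (Fin 6)) (w : Fin 6 → V)
    (d01 : w 0 ≠ w 1) (d02 : w 0 ≠ w 2) (d03 : w 0 ≠ w 3) (d04 : w 0 ≠ w 4) (d05 : w 0 ≠ w 5)
    (d12 : w 1 ≠ w 2) (d13 : w 1 ≠ w 3) (d14 : w 1 ≠ w 4) (d15 : w 1 ≠ w 5)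
    (d23 : w 2 ≠ w 3) (d24 : w 2 ≠ w 4) (d25 : w 2 ≠ w 5)
    (d34 : w 3 ≠ w 4) (d35 : w 3 ≠ w 5) (d45 : w 4 ≠ w 5)
    (h01 : K.Adj 0 1 ↔ G.Adj (w 0) (w 1)) (h02 : K.Adj 0 2 ↔ G.Adj (w 0) (w 2))
    (h03 : K.Adj 0 3 ↔ G.Adj (w 0) (w 3)) (h04 : K.Adj 0 4 ↔ G.Adj (w 0) (w 4))
    (h05 : K.Adj 0 5 ↔ G.Adj (w 0) (w 5)) (h12 : K.Adj 1 2 ↔ G.Adj (w 1) (w 2))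
    (h13 : K.Adj 1 3 ↔ G.Adj (w 1) (w 3)) (h14 : K.Adj 1 4 ↔ G.Adj (w 1) (w 4))
    (h15 : K.Adj 1 5 ↔ G.Adj (w 1) (w 5)) (h23 : K.Adj 2 3 ↔ G.Adj (w 2) (w 3))
    (h24 : K.Adj 2 4 ↔ G.Adj (w 2) (w 4)) (h25 : K.Adj 2 5 ↔ G.Adj (w 2) (w 5))
    (h34 : K.Adj 3 4 ↔ G.Adj (w 3) (w 4)) (h35 : K.Adj 3 5 ↔ G.Adj (w 3) (w 5))
    (h45 : K.Adj 4 5 ↔ G.Adj (w 4) (w 5)) :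
    HasInducedCopy G K := by
  refine copy_of_lt G K w ?_ ?_ <;>
  · intro a b hab
    fin_cases a <;> fin_cases b <;>
      first
        | exact absurd hab (by decide)
        | exact h01 | exact h02 | exact h03 | exact h04 | exact h05
        | exact h12 | exact h13 | exact h14 | exact h15
        | exact h23 | exact h24 | exact h25 | exact h34 | exact h35 | exact h45
        | exact d01 | exact d02 | exact d03 | exact d04 | exact d05
        | exact d12 | exact d13 | exact d14 | exact d15
        | exact d23 | exact d24 | exact d25 | exact d34 | exact d35 | exact d45

lemma bullF2 : ∀ i j : Fin 5, bullGraph.Adj i j ↔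
    F2Graph.Adj (Fin.castLE (by norm_num) i) (Fin.castLE (by norm_num) j) := by decide

def c57 : Fin 5 → Fin 7 := Fin.castLE (by norm_num)

lemma finish {V : Type*} [Fintype V] {G : SimpleGraph V} (φ : V → Fin 7)
    (hinj : Function.Injective φ) (hadj : ∀ a b, G.Adj a b ↔ F2Graph.Adj (φ a) (φ b)) :
    Fintype.card V ≤ 7 ∧ HasInducedCopy F2Graph G :=
  ⟨by simpa using Fintype.card_le_of_injective φ hinj, ⟨⟨φ, hinj⟩, hadj⟩⟩

lemma assemble_pos {V : Type*} [Fintype V] (G : SimpleGraph V) (f : Fin 5 ↪ V) (e : V) (tgt : Fin 7)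
    (key : ∀ u : V, (∃ i : Fin 5, u = f i) ∨ u = e)
    (he : ∀ i : Fin 5, e ≠ f i)
    (hb : ∀ i j, G.Adj (f i) (f j) ↔ F2Graph.Adj (c57 i) (c57 j))
    (hp : ∀ i, G.Adj e (f i) ↔ F2Graph.Adj tgt (c57 i))
    (htgt : 5 ≤ tgt.val) :
    Fintype.card V ≤ 7 ∧ HasInducedCopy F2Graph G := by
  classical
  set φ : V → Fin 7 := fun u => if h : ∃ i : Fin 5, u = f i then c57 (Classical.choose h) else tgt
    with hφdef
  have hφf : ∀ i : Fin 5, φ (f i) = c57 i := by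
    intro i
    have hex : ∃ j : Fin 5, f i = f j := ⟨i, rfl⟩
    rw [hφdef]
    simp only [dif_pos hex]
    exact congrArg c57 (f.injective (Classical.choose_spec hex).symm)
  have hφe : φ e = tgt := by
    rw [hφdef]
    simp only [dif_neg (not_exists.mpr he)]
  have hlt : ∀ i : Fin 5, (c57 i).val < 5 := fun i => i.isLt
  have hinj : Function.Injective φ := by
    intro u u' huu
    rcases key u with ⟨i, rfl⟩ | rfl <;> rcases key u' with ⟨j, rfl⟩ | rfl
    · rw [hφf i, hφf j] at huu
      exact congrArg f (Fin.ext (by simpa [c57] using congrArg Fin.val huu))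
    · rw [hφf i, hφe] at huu
      have := congrArg Fin.val huu
      have := hlt i
      omega
    · rw [hφe, hφf j] at huu
      have := congrArg Fin.val huu
      have := hlt j
      omega
    · rfl
  refine finish φ hinj ?_
  intro a b
  rcases key a with ⟨i, rfl⟩ | rfl <;> rcases key b with ⟨j, rfl⟩ | rfl
  · rw [hφf i, hφf j]; exact hb i j
  · rw [hφf i, hφe]
    exact (G.adj_comm _ _).trans ((hp i).trans (F2Graph.adj_comm _ _))
  · rw [hφe, hφf j]; exact hp j
  · exact iff_of_false G.irrefl F2Graph.irrefl

lemma assemble_neg {V : Type*} [Fintype V] (G : SimpleGraph V) (f : Fin 5 ↪ V)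
    (key : ∀ u : V, ∃ i : Fin 5, u = f i)
    (hb : ∀ i j, G.Adj (f i) (f j) ↔ F2Graph.Adj (c57 i) (c57 j)) :
    Fintype.card V ≤ 7 ∧ HasInducedCopy F2Graph G := by
  classical
  set φ : V → Fin 7 := fun u => c57 (Classical.choose (key u)) with hφdef
  have hφf : ∀ i : Fin 5, φ (f i) = c57 i := by
    intro i
    rw [hφdef]
    exact congrArg c57 (f.injective (Classical.choose_spec (key (f i))).symm)
  have hinj : Function.Injective φ := by
    intro u u' huu
    obtain ⟨i, rfl⟩ := key u
    obtain ⟨j, rfl⟩ := key u'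
    rw [hφf i, hφf j] at huu
    exact congrArg f (Fin.ext (by simpa [c57] using congrArg Fin.val huu))
  refine finish φ hinj ?_
  intro a b
  obtain ⟨i, rfl⟩ := key a
  obtain ⟨j, rfl⟩ := key b
  rw [hφf i, hφf j]
  exact hb i j

/-- A (claw, co-claw)-free graph with no induced net, 3-sun or antenna but
containing an induced bull has at most 7 vertices; more precisely, it is an
induced subgraph of the fixed 7-vertex graph `F₂`. -/
theorem claw_coclaw_bull {V : Type*} [Fintype V] (G : SimpleGraph V)
    (hclaw : ¬ HasInducedCopy G clawGraph)
    (hcoclaw : ¬ HasInducedCopy G coclawGraph)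
    (hnet : ¬ HasInducedCopy G netGraph)
    (hsun : ¬ HasInducedCopy G sunGraph)
    (hant : ¬ HasInducedCopy G antennaGraph)
    (hbull : HasInducedCopy G bullGraph) :
    Fintype.card V ≤ 7 ∧ HasInducedCopy F2Graph G := by
  classical
  obtain ⟨f, hf⟩ := hbull
  have ab01 : G.Adj (f 0) (f 1) := (hf 0 1).mp (by decide)
  have ab02 : G.Adj (f 0) (f 2) := (hf 0 2).mp (by decide)
  have ab12 : G.Adj (f 1) (f 2) := (hf 1 2).mp (by decide)
  have ab03 : G.Adj (f 0) (f 3) := (hf 0 3).mp (by decide)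
  have ab14 : G.Adj (f 1) (f 4) := (hf 1 4).mp (by decide)
  have nb04 : ¬ G.Adj (f 0) (f 4) := fun hh => absurd ((hf 0 4).mpr hh) (by decide)
  have nb13 : ¬ G.Adj (f 1) (f 3) := fun hh => absurd ((hf 1 3).mpr hh) (by decide)
  have nb23 : ¬ G.Adj (f 2) (f 3) := fun hh => absurd ((hf 2 3).mpr hh) (by decide)
  have nb24 : ¬ G.Adj (f 2) (f 4) := fun hh => absurd ((hf 2 4).mpr hh) (by decide)
  have nb34 : ¬ G.Adj (f 3) (f 4) := fun hh => absurd ((hf 3 4).mpr hh) (by decide)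
  have d01 : f 0 ≠ f 1 := fun hh => absurd (f.injective hh) (by decide)
  have d02 : f 0 ≠ f 2 := fun hh => absurd (f.injective hh) (by decide)
  have d03 : f 0 ≠ f 3 := fun hh => absurd (f.injective hh) (by decide)
  have d04 : f 0 ≠ f 4 := fun hh => absurd (f.injective hh) (by decide)
  have d12 : f 1 ≠ f 2 := fun hh => absurd (f.injective hh) (by decide)
  have d13 : f 1 ≠ f 3 := fun hh => absurd (f.injective hh) (by decide)
  have d14 : f 1 ≠ f 4 := fun hh => absurd (f.injective hh) (by decide)
  have d23 : f 2 ≠ f 3 := fun hh => absurd (f.injective hh) (by decide)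
  have d24 : f 2 ≠ f 4 := fun hh => absurd (f.injective hh) (by decide)
  have d34 : f 3 ≠ f 4 := fun hh => absurd (f.injective hh) (by decide)
  have hpat : ∀ v : V, (∀ i : Fin 5, v ≠ f i) →
      (G.Adj v (f 0) ∧ ¬G.Adj v (f 1) ∧ ¬G.Adj v (f 2) ∧ G.Adj v (f 3) ∧ G.Adj v (f 4)) ∨
      (¬G.Adj v (f 0) ∧ G.Adj v (f 1) ∧ ¬G.Adj v (f 2) ∧ G.Adj v (f 3) ∧ G.Adj v (f 4)) := by
    intro v hv
    by_cases h0 : G.Adj v (f 0)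
    · by_cases h1 : G.Adj v (f 1)
      · by_cases h2 : G.Adj v (f 2)
        · by_cases h3 : G.Adj v (f 3)
          · by_cases h4 : G.Adj v (f 4)
            · exact absurd (copy4 G clawGraph ![v, (f 2), (f 3), (f 4)] (hv 2) (hv 3) (hv 4) d23 d24 d34
                    (iff_of_true (by decide) h2)
                    (iff_of_true (by decide) h3)
                    (iff_of_true (by decide) h4)
                    (iff_of_false (by decide) nb23)
                    (iff_of_false (by decide) nb24)
                    (iff_of_false (by decide) nb34)) hclaw
            · exact absurd (copy4 G coclawGraph ![(f 4), (f 0), (f 2), v] (d04).symm (d24).symm (Ne.symm (hv 4)) d02 (Ne.symm (hv 0)) (Ne.symm (hv 2))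
                    (iff_of_false (by decide) (fun hh => nb04 hh.symm))
                    (iff_of_false (by decide) (fun hh => nb24 hh.symm))
                    (iff_of_false (by decide) (fun hh => h4 hh.symm))
                    (iff_of_true (by decide) ab02)
                    (iff_of_true (by decide) (h0).symm)
                    (iff_of_true (by decide) (h2).symm)) hcoclaw
          · by_cases h4 : G.Adj v (f 4)
            · exact absurd (copy4 G coclawGraph ![(f 3), (f 1), (f 2), v] (d13).symm (d23).symm (Ne.symm (hv 3)) d12 (Ne.symm (hv 1)) (Ne.symm (hv 2))
                    (iff_of_false (by decide) (fun hh => nb13 hh.symm))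
                    (iff_of_false (by decide) (fun hh => nb23 hh.symm))
                    (iff_of_false (by decide) (fun hh => h3 hh.symm))
                    (iff_of_true (by decide) ab12)
                    (iff_of_true (by decide) (h1).symm)
                    (iff_of_true (by decide) (h2).symm)) hcoclaw
            · exact absurd (copy4 G coclawGraph ![(f 3), (f 1), (f 2), v] (d13).symm (d23).symm (Ne.symm (hv 3)) d12 (Ne.symm (hv 1)) (Ne.symm (hv 2))
                    (iff_of_false (by decide) (fun hh => nb13 hh.symm))
                    (iff_of_false (by decide) (fun hh => nb23 hh.symm))
                    (iff_of_false (by decide) (fun hh => h3 hh.symm))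
                    (iff_of_true (by decide) ab12)
                    (iff_of_true (by decide) (h1).symm)
                    (iff_of_true (by decide) (h2).symm)) hcoclaw
        · by_cases h3 : G.Adj v (f 3)
          · by_cases h4 : G.Adj v (f 4)
            · exact absurd (copy6 G sunGraph ![(f 2), (f 3), (f 4), v, (f 1), (f 0)] d23 d24 (Ne.symm (hv 2)) (d12).symm (d02).symm d34 (Ne.symm (hv 3)) (d13).symm (d03).symm (Ne.symm (hv 4)) (d14).symm (d04).symm (hv 1) (hv 0) (d01).symm
                    (iff_of_false (by decide) nb23)
                    (iff_of_false (by decide) nb24)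
                    (iff_of_false (by decide) (fun hh => h2 hh.symm))
                    (iff_of_true (by decide) (ab12).symm)
                    (iff_of_true (by decide) (ab02).symm)
                    (iff_of_false (by decide) nb34)
                    (iff_of_true (by decide) (h3).symm)
                    (iff_of_false (by decide) (fun hh => nb13 hh.symm))
                    (iff_of_true (by decide) (ab03).symm)
                    (iff_of_true (by decide) (h4).symm)
                    (iff_of_true (by decide) (ab14).symm)
                    (iff_of_false (by decide) (fun hh => nb04 hh.symm))
                    (iff_of_true (by decide) h1)
                    (iff_of_true (by decide) h0)
                    (iff_of_true (by decide) (ab01).symm)) hsun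
            · exact absurd (copy4 G clawGraph ![(f 1), (f 2), (f 4), v] d12 d14 (Ne.symm (hv 1)) d24 (Ne.symm (hv 2)) (Ne.symm (hv 4))
                    (iff_of_true (by decide) ab12)
                    (iff_of_true (by decide) ab14)
                    (iff_of_true (by decide) (h1).symm)
                    (iff_of_false (by decide) nb24)
                    (iff_of_false (by decide) (fun hh => h2 hh.symm))
                    (iff_of_false (by decide) (fun hh => h4 hh.symm))) hclaw
          · by_cases h4 : G.Adj v (f 4)
            · exact absurd (copy4 G clawGraph ![(f 0), (f 2), (f 3), v] d02 d03 (Ne.symm (hv 0)) d23 (Ne.symm (hv 2)) (Ne.symm (hv 3))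
                    (iff_of_true (by decide) ab02)
                    (iff_of_true (by decide) ab03)
                    (iff_of_true (by decide) (h0).symm)
                    (iff_of_false (by decide) nb23)
                    (iff_of_false (by decide) (fun hh => h2 hh.symm))
                    (iff_of_false (by decide) (fun hh => h3 hh.symm))) hclaw
            · exact absurd (copy4 G clawGraph ![(f 0), (f 2), (f 3), v] d02 d03 (Ne.symm (hv 0)) d23 (Ne.symm (hv 2)) (Ne.symm (hv 3))
                    (iff_of_true (by decide) ab02)
                    (iff_of_true (by decide) ab03)
                    (iff_of_true (by decide) (h0).symm)
                    (iff_of_false (by decide) nb23)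
                    (iff_of_false (by decide) (fun hh => h2 hh.symm))
                    (iff_of_false (by decide) (fun hh => h3 hh.symm))) hclaw
      · by_cases h2 : G.Adj v (f 2)
        · by_cases h3 : G.Adj v (f 3)
          · by_cases h4 : G.Adj v (f 4)
            · exact absurd (copy4 G clawGraph ![v, (f 2), (f 3), (f 4)] (hv 2) (hv 3) (hv 4) d23 d24 d34
                    (iff_of_true (by decide) h2)
                    (iff_of_true (by decide) h3)
                    (iff_of_true (by decide) h4)
                    (iff_of_false (by decide) nb23)
                    (iff_of_false (by decide) nb24)
                    (iff_of_false (by decide) nb34)) hclaw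
            · exact absurd (copy4 G coclawGraph ![(f 4), (f 0), (f 2), v] (d04).symm (d24).symm (Ne.symm (hv 4)) d02 (Ne.symm (hv 0)) (Ne.symm (hv 2))
                    (iff_of_false (by decide) (fun hh => nb04 hh.symm))
                    (iff_of_false (by decide) (fun hh => nb24 hh.symm))
                    (iff_of_false (by decide) (fun hh => h4 hh.symm))
                    (iff_of_true (by decide) ab02)
                    (iff_of_true (by decide) (h0).symm)
                    (iff_of_true (by decide) (h2).symm)) hcoclaw
          · by_cases h4 : G.Adj v (f 4)
            · exact absurd (copy4 G clawGraph ![(f 0), (f 1), (f 3), v] d01 d03 (Ne.symm (hv 0)) d13 (Ne.symm (hv 1)) (Ne.symm (hv 3))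
                    (iff_of_true (by decide) ab01)
                    (iff_of_true (by decide) ab03)
                    (iff_of_true (by decide) (h0).symm)
                    (iff_of_false (by decide) nb13)
                    (iff_of_false (by decide) (fun hh => h1 hh.symm))
                    (iff_of_false (by decide) (fun hh => h3 hh.symm))) hclaw
            · exact absurd (copy4 G clawGraph ![(f 0), (f 1), (f 3), v] d01 d03 (Ne.symm (hv 0)) d13 (Ne.symm (hv 1)) (Ne.symm (hv 3))
                    (iff_of_true (by decide) ab01)
                    (iff_of_true (by decide) ab03)
                    (iff_of_true (by decide) (h0).symm)
                    (iff_of_false (by decide) nb13)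
                    (iff_of_false (by decide) (fun hh => h1 hh.symm))
                    (iff_of_false (by decide) (fun hh => h3 hh.symm))) hclaw
        · by_cases h3 : G.Adj v (f 3)
          · by_cases h4 : G.Adj v (f 4)
            · exact Or.inl ⟨h0, h1, h2, h3, h4⟩
            · exact absurd (copy4 G coclawGraph ![(f 4), (f 0), (f 3), v] (d04).symm (d34).symm (Ne.symm (hv 4)) d03 (Ne.symm (hv 0)) (Ne.symm (hv 3))
                    (iff_of_false (by decide) (fun hh => nb04 hh.symm))
                    (iff_of_false (by decide) (fun hh => nb34 hh.symm))
                    (iff_of_false (by decide) (fun hh => h4 hh.symm))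
                    (iff_of_true (by decide) ab03)
                    (iff_of_true (by decide) (h0).symm)
                    (iff_of_true (by decide) (h3).symm)) hcoclaw
          · by_cases h4 : G.Adj v (f 4)
            · exact absurd (copy4 G clawGraph ![(f 0), (f 1), (f 3), v] d01 d03 (Ne.symm (hv 0)) d13 (Ne.symm (hv 1)) (Ne.symm (hv 3))
                    (iff_of_true (by decide) ab01)
                    (iff_of_true (by decide) ab03)
                    (iff_of_true (by decide) (h0).symm)
                    (iff_of_false (by decide) nb13)
                    (iff_of_false (by decide) (fun hh => h1 hh.symm))
                    (iff_of_false (by decide) (fun hh => h3 hh.symm))) hclaw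
            · exact absurd (copy4 G clawGraph ![(f 0), (f 1), (f 3), v] d01 d03 (Ne.symm (hv 0)) d13 (Ne.symm (hv 1)) (Ne.symm (hv 3))
                    (iff_of_true (by decide) ab01)
                    (iff_of_true (by decide) ab03)
                    (iff_of_true (by decide) (h0).symm)
                    (iff_of_false (by decide) nb13)
                    (iff_of_false (by decide) (fun hh => h1 hh.symm))
                    (iff_of_false (by decide) (fun hh => h3 hh.symm))) hclaw
    · by_cases h1 : G.Adj v (f 1)
      · by_cases h2 : G.Adj v (f 2)
        · by_cases h3 : G.Adj v (f 3)
          · by_cases h4 : G.Adj v (f 4)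
            · exact absurd (copy4 G clawGraph ![v, (f 2), (f 3), (f 4)] (hv 2) (hv 3) (hv 4) d23 d24 d34
                    (iff_of_true (by decide) h2)
                    (iff_of_true (by decide) h3)
                    (iff_of_true (by decide) h4)
                    (iff_of_false (by decide) nb23)
                    (iff_of_false (by decide) nb24)
                    (iff_of_false (by decide) nb34)) hclaw
            · exact absurd (copy4 G clawGraph ![(f 1), (f 0), (f 4), v] (d01).symm d14 (Ne.symm (hv 1)) d04 (Ne.symm (hv 0)) (Ne.symm (hv 4))
                    (iff_of_true (by decide) (ab01).symm)
                    (iff_of_true (by decide) ab14)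
                    (iff_of_true (by decide) (h1).symm)
                    (iff_of_false (by decide) nb04)
                    (iff_of_false (by decide) (fun hh => h0 hh.symm))
                    (iff_of_false (by decide) (fun hh => h4 hh.symm))) hclaw
          · by_cases h4 : G.Adj v (f 4)
            · exact absurd (copy4 G coclawGraph ![(f 3), (f 1), (f 2), v] (d13).symm (d23).symm (Ne.symm (hv 3)) d12 (Ne.symm (hv 1)) (Ne.symm (hv 2))
                    (iff_of_false (by decide) (fun hh => nb13 hh.symm))
                    (iff_of_false (by decide) (fun hh => nb23 hh.symm))
                    (iff_of_false (by decide) (fun hh => h3 hh.symm))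
                    (iff_of_true (by decide) ab12)
                    (iff_of_true (by decide) (h1).symm)
                    (iff_of_true (by decide) (h2).symm)) hcoclaw
            · exact absurd (copy4 G clawGraph ![(f 1), (f 0), (f 4), v] (d01).symm d14 (Ne.symm (hv 1)) d04 (Ne.symm (hv 0)) (Ne.symm (hv 4))
                    (iff_of_true (by decide) (ab01).symm)
                    (iff_of_true (by decide) ab14)
                    (iff_of_true (by decide) (h1).symm)
                    (iff_of_false (by decide) nb04)
                    (iff_of_false (by decide) (fun hh => h0 hh.symm))
                    (iff_of_false (by decide) (fun hh => h4 hh.symm))) hclaw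
        · by_cases h3 : G.Adj v (f 3)
          · by_cases h4 : G.Adj v (f 4)
            · exact Or.inr ⟨h0, h1, h2, h3, h4⟩
            · exact absurd (copy4 G clawGraph ![(f 1), (f 0), (f 4), v] (d01).symm d14 (Ne.symm (hv 1)) d04 (Ne.symm (hv 0)) (Ne.symm (hv 4))
                    (iff_of_true (by decide) (ab01).symm)
                    (iff_of_true (by decide) ab14)
                    (iff_of_true (by decide) (h1).symm)
                    (iff_of_false (by decide) nb04)
                    (iff_of_false (by decide) (fun hh => h0 hh.symm))
                    (iff_of_false (by decide) (fun hh => h4 hh.symm))) hclaw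
          · by_cases h4 : G.Adj v (f 4)
            · exact absurd (copy4 G coclawGraph ![(f 3), (f 1), (f 4), v] (d13).symm d34 (Ne.symm (hv 3)) d14 (Ne.symm (hv 1)) (Ne.symm (hv 4))
                    (iff_of_false (by decide) (fun hh => nb13 hh.symm))
                    (iff_of_false (by decide) nb34)
                    (iff_of_false (by decide) (fun hh => h3 hh.symm))
                    (iff_of_true (by decide) ab14)
                    (iff_of_true (by decide) (h1).symm)
                    (iff_of_true (by decide) (h4).symm)) hcoclaw
            · exact absurd (copy4 G clawGraph ![(f 1), (f 0), (f 4), v] (d01).symm d14 (Ne.symm (hv 1)) d04 (Ne.symm (hv 0)) (Ne.symm (hv 4))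
                    (iff_of_true (by decide) (ab01).symm)
                    (iff_of_true (by decide) ab14)
                    (iff_of_true (by decide) (h1).symm)
                    (iff_of_false (by decide) nb04)
                    (iff_of_false (by decide) (fun hh => h0 hh.symm))
                    (iff_of_false (by decide) (fun hh => h4 hh.symm))) hclaw
      · by_cases h2 : G.Adj v (f 2)
        · by_cases h3 : G.Adj v (f 3)
          · by_cases h4 : G.Adj v (f 4)
            · exact absurd (copy4 G clawGraph ![v, (f 2), (f 3), (f 4)] (hv 2) (hv 3) (hv 4) d23 d24 d34
                    (iff_of_true (by decide) h2)
                    (iff_of_true (by decide) h3)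
                    (iff_of_true (by decide) h4)
                    (iff_of_false (by decide) nb23)
                    (iff_of_false (by decide) nb24)
                    (iff_of_false (by decide) nb34)) hclaw
            · exact absurd (copy6 G antennaGraph ![(f 3), (f 0), (f 2), v, (f 1), (f 4)] (d03).symm (d23).symm (Ne.symm (hv 3)) (d13).symm d34 d02 (Ne.symm (hv 0)) d01 d04 (Ne.symm (hv 2)) (d12).symm d24 (hv 1) (hv 4) d14
                    (iff_of_true (by decide) (ab03).symm)
                    (iff_of_false (by decide) (fun hh => nb23 hh.symm))
                    (iff_of_true (by decide) (h3).symm)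
                    (iff_of_false (by decide) (fun hh => nb13 hh.symm))
                    (iff_of_false (by decide) nb34)
                    (iff_of_true (by decide) ab02)
                    (iff_of_false (by decide) (fun hh => h0 hh.symm))
                    (iff_of_true (by decide) ab01)
                    (iff_of_false (by decide) nb04)
                    (iff_of_true (by decide) (h2).symm)
                    (iff_of_true (by decide) (ab12).symm)
                    (iff_of_false (by decide) nb24)
                    (iff_of_false (by decide) h1)
                    (iff_of_false (by decide) h4)
                    (iff_of_true (by decide) ab14)) hant
          · by_cases h4 : G.Adj v (f 4)
            · exact absurd (copy6 G antennaGraph ![(f 4), (f 1), (f 2), v, (f 0), (f 3)] (d14).symm (d24).symm (Ne.symm (hv 4)) (d04).symm (d34).symm d12 (Ne.symm (hv 1)) (d01).symm d13 (Ne.symm (hv 2)) (d02).symm d23 (hv 0) (hv 3) d03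
                    (iff_of_true (by decide) (ab14).symm)
                    (iff_of_false (by decide) (fun hh => nb24 hh.symm))
                    (iff_of_true (by decide) (h4).symm)
                    (iff_of_false (by decide) (fun hh => nb04 hh.symm))
                    (iff_of_false (by decide) (fun hh => nb34 hh.symm))
                    (iff_of_true (by decide) ab12)
                    (iff_of_false (by decide) (fun hh => h1 hh.symm))
                    (iff_of_true (by decide) (ab01).symm)
                    (iff_of_false (by decide) nb13)
                    (iff_of_true (by decide) (h2).symm)
                    (iff_of_true (by decide) (ab02).symm)
                    (iff_of_false (by decide) nb23)
                    (iff_of_false (by decide) h0)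
                    (iff_of_false (by decide) h3)
                    (iff_of_true (by decide) ab03)) hant
            · exact absurd (copy6 G netGraph ![(f 0), (f 1), (f 2), (f 3), (f 4), v] d01 d02 d03 d04 (Ne.symm (hv 0)) d12 d13 d14 (Ne.symm (hv 1)) d23 d24 (Ne.symm (hv 2)) d34 (Ne.symm (hv 3)) (Ne.symm (hv 4))
                    (iff_of_true (by decide) ab01)
                    (iff_of_true (by decide) ab02)
                    (iff_of_true (by decide) ab03)
                    (iff_of_false (by decide) nb04)
                    (iff_of_false (by decide) (fun hh => h0 hh.symm))
                    (iff_of_true (by decide) ab12)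
                    (iff_of_false (by decide) nb13)
                    (iff_of_true (by decide) ab14)
                    (iff_of_false (by decide) (fun hh => h1 hh.symm))
                    (iff_of_false (by decide) nb23)
                    (iff_of_false (by decide) nb24)
                    (iff_of_true (by decide) (h2).symm)
                    (iff_of_false (by decide) nb34)
                    (iff_of_false (by decide) (fun hh => h3 hh.symm))
                    (iff_of_false (by decide) (fun hh => h4 hh.symm))) hnet
        · by_cases h3 : G.Adj v (f 3)
          · by_cases h4 : G.Adj v (f 4)
            · exact absurd (copy4 G coclawGraph ![v, (f 0), (f 1), (f 2)] (hv 0) (hv 1) (hv 2) d01 d02 d12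
                    (iff_of_false (by decide) h0)
                    (iff_of_false (by decide) h1)
                    (iff_of_false (by decide) h2)
                    (iff_of_true (by decide) ab01)
                    (iff_of_true (by decide) ab02)
                    (iff_of_true (by decide) ab12)) hcoclaw
            · exact absurd (copy4 G coclawGraph ![v, (f 0), (f 1), (f 2)] (hv 0) (hv 1) (hv 2) d01 d02 d12
                    (iff_of_false (by decide) h0)
                    (iff_of_false (by decide) h1)
                    (iff_of_false (by decide) h2)
                    (iff_of_true (by decide) ab01)
                    (iff_of_true (by decide) ab02)
                    (iff_of_true (by decide) ab12)) hcoclaw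
          · by_cases h4 : G.Adj v (f 4)
            · exact absurd (copy4 G coclawGraph ![v, (f 0), (f 1), (f 2)] (hv 0) (hv 1) (hv 2) d01 d02 d12
                    (iff_of_false (by decide) h0)
                    (iff_of_false (by decide) h1)
                    (iff_of_false (by decide) h2)
                    (iff_of_true (by decide) ab01)
                    (iff_of_true (by decide) ab02)
                    (iff_of_true (by decide) ab12)) hcoclaw
            · exact absurd (copy4 G coclawGraph ![v, (f 0), (f 1), (f 2)] (hv 0) (hv 1) (hv 2) d01 d02 d12
                    (iff_of_false (by decide) h0)
                    (iff_of_false (by decide) h1)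
                    (iff_of_false (by decide) h2)
                    (iff_of_true (by decide) ab01)
                    (iff_of_true (by decide) ab02)
                    (iff_of_true (by decide) ab12)) hcoclaw
  have hb : ∀ i j, G.Adj (f i) (f j) ↔ F2Graph.Adj (c57 i) (c57 j) :=
    fun i j => (hf i j).symm.trans (bullF2 i j)
  by_cases hex : ∃ v : V, ∀ i : Fin 5, v ≠ f i
  · obtain ⟨e, he⟩ := hex
    have huniq : ∀ w : V, (∀ i : Fin 5, w ≠ f i) → w = e := by
      intro w hw
      by_contra hne
      have hne2 : e ≠ w := Ne.symm hne
      rcases hpat e he with ⟨p0, p1, p2, p3, p4⟩ | ⟨p0, p1, p2, p3, p4⟩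
      · rcases hpat w hw with ⟨q0, q1, q2, q3, q4⟩ | ⟨q0, q1, q2, q3, q4⟩
        · by_cases hvw : G.Adj e w
          · exact absurd (copy4 G coclawGraph ![(f 1), (f 3), e, w] d13 (Ne.symm (he 1)) (Ne.symm (hw 1)) (Ne.symm (he 3)) (Ne.symm (hw 3)) hne2
                  (iff_of_false (by decide) nb13)
                  (iff_of_false (by decide) (fun hh => p1 hh.symm))
                  (iff_of_false (by decide) (fun hh => q1 hh.symm))
                  (iff_of_true (by decide) (p3).symm)
                  (iff_of_true (by decide) (q3).symm)
                  (iff_of_true (by decide) hvw)) hcoclaw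
          · exact absurd (copy4 G clawGraph ![(f 0), (f 1), e, w] d01 (Ne.symm (he 0)) (Ne.symm (hw 0)) (Ne.symm (he 1)) (Ne.symm (hw 1)) hne2
                  (iff_of_true (by decide) ab01)
                  (iff_of_true (by decide) (p0).symm)
                  (iff_of_true (by decide) (q0).symm)
                  (iff_of_false (by decide) (fun hh => p1 hh.symm))
                  (iff_of_false (by decide) (fun hh => q1 hh.symm))
                  (iff_of_false (by decide) hvw)) hclaw
        · by_cases hvw : G.Adj e w
          · exact absurd (copy4 G coclawGraph ![(f 2), (f 3), e, w] d23 (Ne.symm (he 2)) (Ne.symm (hw 2)) (Ne.symm (he 3)) (Ne.symm (hw 3)) hne2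
                  (iff_of_false (by decide) nb23)
                  (iff_of_false (by decide) (fun hh => p2 hh.symm))
                  (iff_of_false (by decide) (fun hh => q2 hh.symm))
                  (iff_of_true (by decide) (p3).symm)
                  (iff_of_true (by decide) (q3).symm)
                  (iff_of_true (by decide) hvw)) hcoclaw
          · exact absurd (copy6 G antennaGraph ![(f 3), w, (f 4), e, (f 1), (f 2)] (Ne.symm (hw 3)) d34 (Ne.symm (he 3)) (d13).symm (d23).symm (hw 4) (Ne.symm hne2) (hw 1) (hw 2) (Ne.symm (he 4)) (d14).symm (d24).symm (he 1) (he 2) d12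
                  (iff_of_true (by decide) (q3).symm)
                  (iff_of_false (by decide) nb34)
                  (iff_of_true (by decide) (p3).symm)
                  (iff_of_false (by decide) (fun hh => nb13 hh.symm))
                  (iff_of_false (by decide) (fun hh => nb23 hh.symm))
                  (iff_of_true (by decide) q4)
                  (iff_of_false (by decide) (fun hh => hvw hh.symm))
                  (iff_of_true (by decide) q1)
                  (iff_of_false (by decide) q2)
                  (iff_of_true (by decide) (p4).symm)
                  (iff_of_true (by decide) (ab14).symm)
                  (iff_of_false (by decide) (fun hh => nb24 hh.symm))
                  (iff_of_false (by decide) p1)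
                  (iff_of_false (by decide) p2)
                  (iff_of_true (by decide) ab12)) hant
      · rcases hpat w hw with ⟨q0, q1, q2, q3, q4⟩ | ⟨q0, q1, q2, q3, q4⟩
        · by_cases hvw : G.Adj e w
          · exact absurd (copy4 G coclawGraph ![(f 2), (f 3), e, w] d23 (Ne.symm (he 2)) (Ne.symm (hw 2)) (Ne.symm (he 3)) (Ne.symm (hw 3)) hne2
                  (iff_of_false (by decide) nb23)
                  (iff_of_false (by decide) (fun hh => p2 hh.symm))
                  (iff_of_false (by decide) (fun hh => q2 hh.symm))
                  (iff_of_true (by decide) (p3).symm)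
                  (iff_of_true (by decide) (q3).symm)
                  (iff_of_true (by decide) hvw)) hcoclaw
          · exact absurd (copy6 G antennaGraph ![(f 3), e, (f 4), w, (f 1), (f 2)] (Ne.symm (he 3)) d34 (Ne.symm (hw 3)) (d13).symm (d23).symm (he 4) hne2 (he 1) (he 2) (Ne.symm (hw 4)) (d14).symm (d24).symm (hw 1) (hw 2) d12
                  (iff_of_true (by decide) (p3).symm)
                  (iff_of_false (by decide) nb34)
                  (iff_of_true (by decide) (q3).symm)
                  (iff_of_false (by decide) (fun hh => nb13 hh.symm))
                  (iff_of_false (by decide) (fun hh => nb23 hh.symm))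
                  (iff_of_true (by decide) p4)
                  (iff_of_false (by decide) hvw)
                  (iff_of_true (by decide) p1)
                  (iff_of_false (by decide) p2)
                  (iff_of_true (by decide) (q4).symm)
                  (iff_of_true (by decide) (ab14).symm)
                  (iff_of_false (by decide) (fun hh => nb24 hh.symm))
                  (iff_of_false (by decide) q1)
                  (iff_of_false (by decide) q2)
                  (iff_of_true (by decide) ab12)) hant
        · by_cases hvw : G.Adj e w
          · exact absurd (copy4 G coclawGraph ![(f 0), (f 4), e, w] d04 (Ne.symm (he 0)) (Ne.symm (hw 0)) (Ne.symm (he 4)) (Ne.symm (hw 4)) hne2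
                  (iff_of_false (by decide) nb04)
                  (iff_of_false (by decide) (fun hh => p0 hh.symm))
                  (iff_of_false (by decide) (fun hh => q0 hh.symm))
                  (iff_of_true (by decide) (p4).symm)
                  (iff_of_true (by decide) (q4).symm)
                  (iff_of_true (by decide) hvw)) hcoclaw
          · exact absurd (copy4 G clawGraph ![(f 1), (f 0), e, w] (d01).symm (Ne.symm (he 1)) (Ne.symm (hw 1)) (Ne.symm (he 0)) (Ne.symm (hw 0)) hne2
                  (iff_of_true (by decide) (ab01).symm)
                  (iff_of_true (by decide) (p1).symm)
                  (iff_of_true (by decide) (q1).symm)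
                  (iff_of_false (by decide) (fun hh => p0 hh.symm))
                  (iff_of_false (by decide) (fun hh => q0 hh.symm))
                  (iff_of_false (by decide) hvw)) hclaw
    have key : ∀ u : V, (∃ i : Fin 5, u = f i) ∨ u = e := by
      intro u
      by_cases h : ∃ i : Fin 5, u = f i
      · exact Or.inl h
      · exact Or.inr (huniq u (not_exists.mp h))
    rcases hpat e he with ⟨p0, p1, p2, p3, p4⟩ | ⟨p0, p1, p2, p3, p4⟩
    · refine assemble_pos G f e 5 key he hb ?_ (by decide)
      intro i
      fin_cases i
      exacts [iff_of_true p0 (by decide), iff_of_false p1 (by decide),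
        iff_of_false p2 (by decide), iff_of_true p3 (by decide), iff_of_true p4 (by decide)]
    · refine assemble_pos G f e 6 key he hb ?_ (by decide)
      intro i
      fin_cases i
      exacts [iff_of_false p0 (by decide), iff_of_true p1 (by decide),
        iff_of_false p2 (by decide), iff_of_true p3 (by decide), iff_of_true p4 (by decide)]
  · push_neg at hex
    exact assemble_neg G f hex hb
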